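/- For any subobject F of an object E in a slope-filtered abelian category with Harder–Narasimhan filtration, the point (rk F, deg F) lies on or below the Harder–Narasimhan polygon of E. -/

import Mathlib

/-!
Intersecting `F` with the filtration gives a filtration `F ⊓ Eⱼ` of `F` whose successive
quotients embed into the semistable quotients `Qⱼ = Eⱼ₊₁ / Eⱼ`. So the `j`-th step of the path
`k ↦ (rk (F ⊓ Eₖ), deg (F ⊓ Eₖ))` is horizontally no longer than the `j`-th side of the
polygon and has slope at most `μ(Qⱼ)`. Measured against the line through the `i`-th side, the
steps with `j < i` lose at most what the polygon loses (those sides are steeper) and the steps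
with `j ≥ i` can only go down (those sides are flatter). Both paths start at `E₀ = ⊥` and the
polygon reaches the line at `Eᵢ`, so the endpoint `(rk F, deg F)` lies on or below the line.
-/

open CategoryTheory CategoryTheory.Limits

/-- Semistability with respect to slope `μ = dg / rk`. -/
def SlopeSemistable {C : Type*} [Category C] (rk dg : C → ℚ) (E : C) : Prop :=
  ∀ (A : C) (i : A ⟶ E), Mono i → 0 < rk A → dg A * rk E ≤ dg E * rk A

def increment {n : ℕ} (g : Fin (n + 1) → ℚ) (j : Fin n) : ℚ :=
  g j.succ - g j.castSucc

theorem step_le_of_slope_le {δ ρ D R D' R' : ℚ} (hstep : δ * R ≤ D * ρ) (hρR : ρ ≤ R)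
    (hR : 0 < R) (hR' : 0 ≤ R') (hslope : D' * R ≤ D * R') :
    δ * R' - D' * ρ ≤ D * R' - D' * R := by
  nlinarith [mul_le_mul_of_nonneg_right hstep hR',
    mul_le_mul_of_nonneg_right hρR (sub_nonneg.2 hslope)]

theorem step_nonpos_of_le_slope {δ ρ D R D' R' : ℚ} (hstep : δ * R ≤ D * ρ) (hρ : 0 ≤ ρ)
    (hR : 0 < R) (hR' : 0 ≤ R') (hslope : D * R' ≤ D' * R) :
    δ * R' - D' * ρ ≤ 0 := by
  nlinarith [mul_le_mul_of_nonneg_right hstep hR', mul_le_mul_of_nonneg_left hslope hρ]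

theorem le_polygon_side {n : ℕ} (f r D R : Fin (n + 1) → ℚ) (i : Fin n)
    (hstep : ∀ j, increment f j * increment R j ≤ increment D j * increment r j)
    (hr_nonneg : ∀ j, 0 ≤ increment r j) (hr_le : ∀ j, increment r j ≤ increment R j)
    (hR_pos : ∀ j, 0 < increment R j)
    (hslope : ∀ j k, j < k → increment D k * increment R j ≤ increment D j * increment R k)
    (hf₀ : f 0 = D 0) (hr₀ : r 0 = R 0) :
    (f (Fin.last n) - D i.castSucc) * increment R i ≤
      increment D i * (r (Fin.last n) - R i.castSucc) := by
  set ℓ : ℚ → ℚ → ℚ := fun x y => y * increment R i - increment D i * x with hℓ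
  -- the polygon path is frozen at its vertex `Eᵢ` once it reaches it
  let gap : Fin (n + 1) → ℚ := fun k =>
    ℓ (R (min k i.castSucc)) (D (min k i.castSucc)) - ℓ (r k) (f k)
  have hgap : Monotone gap := by
    refine Fin.monotone_iff_le_succ.2 fun j => ?_
    simp only [gap, hℓ]
    rcases lt_or_ge j i with hji | hij
    · rw [min_eq_left (Fin.succ_le_castSucc_iff.2 hji),
        min_eq_left (Fin.castSucc_le_castSucc_iff.2 hji.le)]
      have := step_le_of_slope_le (hstep j) (hr_le j) (hR_pos j) (hR_pos i).le
        (hslope j i hji)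
      unfold increment at this ⊢
      linarith
    · have hi : i.castSucc ≤ j.castSucc := Fin.castSucc_le_castSucc_iff.2 hij
      rw [min_eq_right (hi.trans (Fin.castSucc_le_succ j)), min_eq_right hi]
      have hslope' : increment D j * increment R i ≤ increment D i * increment R j := by
        rcases hij.lt_or_eq with hij | rfl
        exacts [hslope i j hij, le_rfl]
      have := step_nonpos_of_le_slope (hstep j) (hr_nonneg j) (hR_pos j) (hR_pos i).le hslope'
      unfold increment at this ⊢
      linarith
  have := hgap (Fin.zero_le (Fin.last n))
  simp only [gap, hℓ, min_eq_right (Fin.le_last _), min_eq_left (Fin.zero_le _), hf₀, hr₀]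
    at this
  unfold increment at *
  linarith

namespace CategoryTheory.Subobject

variable {C : Type*} [Category C] [Abelian C] {E : C}

theorem eq_of_isZero_cokernel_ofLE {P Q : Subobject E} (h : P ≤ Q)
    (hz : IsZero (cokernel (ofLE P Q h))) : P = Q :=
  have := Preadditive.epi_of_isZero_cokernel _ hz
  have := isIso_of_mono_of_epi (ofLE P Q h)
  eq_of_comm (asIso (ofLE P Q h)) (ofLE_arrow h)

theorem isPullback_inf_ofLE (F : Subobject E) {P Q : Subobject E} (h : P ≤ Q) :
    IsPullback (ofLE (F ⊓ P) (F ⊓ Q) (inf_le_inf_left F h))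
      (ofLE (F ⊓ P) P (inf_le_right F P)) (ofLE (F ⊓ Q) Q (inf_le_right F Q)) (ofLE P Q h) :=
  IsPullback.of_right (h₁₂ := ofLE (F ⊓ Q) F (inf_le_left F Q)) (h₂₂ := Q.arrow)
    (by simpa only [ofLE_comp_ofLE, ofLE_arrow] using inf_isPullback F P)
    (by simp only [ofLE_comp_ofLE]) (inf_isPullback F Q)

instance mono_cokernel_map_inf (F : Subobject E) {P Q : Subobject E} (h : P ≤ Q) :
    Mono (cokernel.map _ _ _ _ (isPullback_inf_ofLE F h).w) :=
  Abelian.mono_cokernel_map_of_isPullback (isPullback_inf_ofLE F h)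

end CategoryTheory.Subobject

def IsAdditiveOnCokernels {C : Type*} [Category C] [HasZeroMorphisms C] [HasCokernels C]
    (φ : C → ℚ) : Prop :=
  ∀ (X Y : C) (f : X ⟶ Y), Mono f → φ Y = φ X + φ (cokernel f)

namespace IsAdditiveOnCokernels

open Subobject

section

variable {C : Type*} [Category C] [HasZeroMorphisms C] [HasCokernels C] {φ : C → ℚ}

theorem apply_cokernel_ofLE (hφ : IsAdditiveOnCokernels φ) {E : C} {P Q : Subobject E}
    (h : P ≤ Q) : φ (cokernel (ofLE P Q h)) = φ Q - φ P := by
  rw [hφ _ _ (ofLE P Q h) inferInstance]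
  ring

theorem apply_le_of_mono (hφ : IsAdditiveOnCokernels φ) (hφ_nonneg : ∀ X, 0 ≤ φ X) {X Y : C}
    (f : X ⟶ Y) [Mono f] : φ X ≤ φ Y := by
  rw [hφ X Y f inferInstance]
  linarith [hφ_nonneg (cokernel f)]

end

variable {C : Type*} [Category C] [Abelian C] {E : C} {rk : C → ℚ}

theorem apply_sub_pos_of_lt (hrk : IsAdditiveOnCokernels rk)
    (hrk_pos : ∀ X : C, ¬ IsZero X → 0 < rk X) {P Q : Subobject E} (h : P < Q) :
    0 < rk Q - rk P := by
  rw [← hrk.apply_cokernel_ofLE h.le]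
  exact hrk_pos _ fun hz => h.ne (eq_of_isZero_cokernel_ofLE h.le hz)

theorem apply_inf_sub_nonneg (hrk : IsAdditiveOnCokernels rk) (hrk_nonneg : ∀ X, 0 ≤ rk X)
    (F : Subobject E) {P Q : Subobject E} (h : P ≤ Q) :
    0 ≤ rk (F ⊓ Q : Subobject E) - rk (F ⊓ P : Subobject E) := by
  rw [← hrk.apply_cokernel_ofLE (inf_le_inf_left F h)]
  exact hrk_nonneg _

theorem apply_inf_sub_le (hrk : IsAdditiveOnCokernels rk) (hrk_nonneg : ∀ X, 0 ≤ rk X)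
    (F : Subobject E) {P Q : Subobject E} (h : P ≤ Q) :
    rk (F ⊓ Q : Subobject E) - rk (F ⊓ P : Subobject E) ≤ rk Q - rk P := by
  rw [← hrk.apply_cokernel_ofLE (inf_le_inf_left F h), ← hrk.apply_cokernel_ofLE h]
  exact hrk.apply_le_of_mono hrk_nonneg (cokernel.map _ _ _ _ (isPullback_inf_ofLE F h).w)

end IsAdditiveOnCokernels

open Subobject in
theorem SlopeSemistable.inf_sub_slope_le {C : Type*} [Category C] [Abelian C] {E : C}
    {rk dg : C → ℚ} (hrk : IsAdditiveOnCokernels rk) (hdg : IsAdditiveOnCokernels dg)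
    (hrk_pos : ∀ X : C, ¬ IsZero X → 0 < rk X) (F : Subobject E) {P Q : Subobject E}
    (h : P ≤ Q) (hss : SlopeSemistable rk dg (cokernel (ofLE P Q h))) :
    (dg (F ⊓ Q : Subobject E) - dg (F ⊓ P : Subobject E)) * (rk Q - rk P) ≤
      (dg Q - dg P) * (rk (F ⊓ Q : Subobject E) - rk (F ⊓ P : Subobject E)) := by
  by_cases hz : IsZero (cokernel (ofLE (F ⊓ P) (F ⊓ Q) (inf_le_inf_left F h)))
  · rw [eq_of_isZero_cokernel_ofLE _ hz, sub_self, sub_self, zero_mul, mul_zero]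
  · have := hss _ (cokernel.map _ _ _ _ (isPullback_inf_ofLE F h).w) inferInstance (hrk_pos _ hz)
    rwa [hdg.apply_cokernel_ofLE, hdg.apply_cokernel_ofLE, hrk.apply_cokernel_ofLE,
      hrk.apply_cokernel_ofLE] at this

/-- For any subobject `F` of an object `E` with Harder–Narasimhan
filtration `⊥ = E₀ < E₁ < … < Eₙ = ⊤` (successive quotients semistable with
strictly decreasing slopes), the point `(rk F, deg F)` lies on or below the
Harder–Narasimhan polygon of `E`: for the segment `[rk Eᵢ, rk Eᵢ₊₁]` containing
`rk F`, one has (cross-multiplied)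
`(deg F − deg Eᵢ) (rk Eᵢ₊₁ − rk Eᵢ) ≤ (deg Eᵢ₊₁ − deg Eᵢ) (rk F − rk Eᵢ)`. -/
theorem subobject_point_on_or_below_HN_polygon
    {C : Type*} [Category C] [Abelian C]
    (rk dg : C → ℚ)
    (hrk_add : ∀ (X Y : C) (f : X ⟶ Y), Mono f → rk Y = rk X + rk (cokernel f))
    (hdg_add : ∀ (X Y : C) (f : X ⟶ Y), Mono f → dg Y = dg X + dg (cokernel f))
    (hrk_pos : ∀ X : C, ¬ IsZero X → 0 < rk X)
    (hrk_zero : ∀ X : C, IsZero X → rk X = 0)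
    (E : C) (n : ℕ)
    (Efil : Fin (n + 1) → Subobject E)
    (hmono : StrictMono Efil)
    (hbot : Efil 0 = ⊥) (htop : Efil (Fin.last n) = ⊤)
    (Q : Fin n → C)
    (hQ : ∀ i : Fin n, Q i = cokernel (Subobject.ofLE (Efil i.castSucc) (Efil i.succ)
      (hmono.monotone (show i.castSucc < i.succ from Fin.castSucc_lt_succ).le)))
    (hQss : ∀ i : Fin n, SlopeSemistable rk dg (Q i))
    (hQslopes : ∀ i j : Fin n, i < j → dg (Q j) * rk (Q i) < dg (Q i) * rk (Q j)) :
    ∀ (F : Subobject E) (i : Fin n),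
      rk ((Efil i.castSucc : C)) ≤ rk ((F : C)) →
      rk ((F : C)) ≤ rk ((Efil i.succ : C)) →
      (dg ((F : C)) - dg ((Efil i.castSucc : C))) *
          (rk ((Efil i.succ : C)) - rk ((Efil i.castSucc : C))) ≤
        (dg ((Efil i.succ : C)) - dg ((Efil i.castSucc : C))) *
          (rk ((F : C)) - rk ((Efil i.castSucc : C))) := by
  intro F i _ _
  have hrk : IsAdditiveOnCokernels rk := hrk_add
  have hdg : IsAdditiveOnCokernels dg := hdg_add
  have hrk_nonneg (X : C) : 0 ≤ rk X := by
    by_cases hX : IsZero X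
    exacts [(hrk_zero X hX).ge, (hrk_pos X hX).le]
  have hle (j : Fin n) : Efil j.castSucc ≤ Efil j.succ := hmono.monotone (Fin.castSucc_le_succ j)
  have hQ_rk (j : Fin n) : rk (Q j) = increment (fun k => rk (Efil k : C)) j := by
    rw [hQ j, hrk.apply_cokernel_ofLE]; rfl
  have hQ_dg (j : Fin n) : dg (Q j) = increment (fun k => dg (Efil k : C)) j := by
    rw [hQ j, hdg.apply_cokernel_ofLE]; rfl
  have key := le_polygon_side (fun k => dg (F ⊓ Efil k : Subobject E))
    (fun k => rk (F ⊓ Efil k : Subobject E)) (fun k => dg (Efil k : C))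
    (fun k => rk (Efil k : C)) i
    (fun j => (hQ j ▸ hQss j).inf_sub_slope_le hrk hdg hrk_pos F (hle j))
    (fun j => hrk.apply_inf_sub_nonneg hrk_nonneg F (hle j))
    (fun j => hrk.apply_inf_sub_le hrk_nonneg F (hle j))
    (fun j => hrk.apply_sub_pos_of_lt hrk_pos (hmono Fin.castSucc_lt_succ))
    (fun j k hjk => by simpa only [hQ_rk, hQ_dg] using (hQslopes j k hjk).le)
    (by simp only [hbot, inf_bot_eq]) (by simp only [hbot, inf_bot_eq])
  simpa only [htop, inf_top_eq, increment] using key
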